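/- There exists no split evaluation system satisfying the non-triviality assumption that preserves admissibility under all traces: for any split system M over (S, A, A_env, Adm, T) with D consistent with Adm, if there exist s, a with Adm(s,a) true and D(s,a) = Allow, and e ∈ A_env, s* with s →e s* and Adm(s*,a) false, then M has a trace violating admissibility preservation. -/

import Mathlib

/-- Governance dispositions. -/
inductive Disp : Type
  | Allow | Refuse | Escalate
deriving DecidableEq

/-- Labels of a split evaluation system: decision, environment, execution. -/
inductive SplitLabel (A Aenv : Type) : Type
  | dec (a : A)
  | env (e : Aenv)
  | exec (a : A)

/-- `IsTrace step s tr` : `tr` is a valid alternating (label, state) trace from `s`. -/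
def IsTrace {σ L : Type} (step : σ → L → σ → Prop) : σ → List (L × σ) → Prop
  | _, [] => True
  | s, (l, s') :: rest => step s l s' ∧ IsTrace step s' rest

/-- The list of transitions (source, label, target) occurring in a trace. -/
def traceSteps {σ L : Type} : σ → List (L × σ) → List (σ × L × σ)
  | _, [] => []
  | s, (l, s') :: rest => (s, l, s') :: traceSteps s' rest

/-- One LTS step of a split evaluation system: the decision transition records
`Allow` dispositions, environment transitions may interleave, and the execution
transition fires `T` in the *current* state whenever an `Allow` was recorded. -/
inductive SplitStep {S A Aenv : Type} (D : S → A → Disp) (T : S → A → S)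
    (envRel : Aenv → S → S → Prop) :
    S × Option A → SplitLabel A Aenv → S × Option A → Prop
  | dec (s : S) (a : A) (h : D s a = Disp.Allow) :
      SplitStep D T envRel (s, none) (SplitLabel.dec a) (s, some a)
  | env (s s' : S) (p : Option A) (e : Aenv) (h : envRel e s s') :
      SplitStep D T envRel (s, p) (SplitLabel.env e) (s', p)
  | exec (s : S) (a : A) :
      SplitStep D T envRel (s, some a) (SplitLabel.exec a) (T s a, none)

/-! The decision for `a` is taken in `s`, where it is allowed; an environment step to `s*` may then
interleave before the recorded `Allow` is executed, so `T` fires in `s*`, where `a` is inadmissible. -/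

section SplitStep

variable {S A Aenv : Type} {D : S → A → Disp} {T : S → A → S} {envRel : Aenv → S → S → Prop}

def decEnvExecTrace (T : S → A → S) (s s' : S) (a : A) (e : Aenv) :
    List (SplitLabel A Aenv × (S × Option A)) :=
  [(SplitLabel.dec a, (s, some a)), (SplitLabel.env e, (s', some a)),
    (SplitLabel.exec a, (T s' a, none))]

theorem isTrace_decEnvExecTrace {s s' : S} {a : A} {e : Aenv}
    (hD : D s a = Disp.Allow) (hEnv : envRel e s s') :
    IsTrace (SplitStep D T envRel) (s, none) (decEnvExecTrace T s s' a e) :=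
  ⟨SplitStep.dec s a hD, SplitStep.env s s' (some a) e hEnv, SplitStep.exec s' a, trivial⟩

theorem exec_mem_traceSteps_decEnvExecTrace (s s' : S) (a : A) (e : Aenv) :
    ((s', some a), SplitLabel.exec a, (T s' a, none)) ∈
      traceSteps (s, none) (decEnvExecTrace T s s' a e) := by
  simp [decEnvExecTrace, traceSteps]

end SplitStep

theorem no_split_system_preserves_admissibility_general
    {S A Aenv : Type} (Adm : S → A → Bool) (D : S → A → Disp) (T : S → A → S)
    (envRel : Aenv → S → S → Prop)
    (s : S) (a : A) (e : Aenv) (sStar : S)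
    (hD : D s a = Disp.Allow)
    (hEnv : envRel e s sStar) (hBad : Adm sStar a = false) :
    ∃ (s0 : S × Option A) (tr : List (SplitLabel A Aenv × (S × Option A))),
      IsTrace (SplitStep D T envRel) s0 tr ∧
      ∃ (p : S × Option A) (b : A) (q : S × Option A),
        (p, SplitLabel.exec b, q) ∈ traceSteps s0 tr ∧ Adm p.1 b = false :=
  ⟨(s, none), decEnvExecTrace T s sStar a e, isTrace_decEnvExecTrace hD hEnv,
    (sStar, some a), a, (T sStar a, none), exec_mem_traceSteps_decEnvExecTrace s sStar a e, hBad⟩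

/-- no split evaluation system satisfying non-triviality preserves
admissibility: with `D` consistent with `Adm` and the non-triviality witnesses,
the split system has a trace violating admissibility preservation. -/
theorem no_split_system_preserves_admissibility
    {S A Aenv : Type} (Adm : S → A → Bool) (D : S → A → Disp) (T : S → A → S)
    (envRel : Aenv → S → S → Prop)
    (h1 : ∀ s a, D s a = Disp.Allow → Adm s a = true)
    (h2 : ∀ s a, D s a = Disp.Refuse → Adm s a = false)
    (h3 : ∀ s a, Adm s a = true → D s a ≠ Disp.Refuse)
    (h4 : ∀ s a, Adm s a = false → D s a ≠ Disp.Allow)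
    (s : S) (a : A) (e : Aenv) (sStar : S)
    (hAdm : Adm s a = true) (hD : D s a = Disp.Allow)
    (hEnv : envRel e s sStar) (hBad : Adm sStar a = false) :
    ∃ (s0 : S × Option A) (tr : List (SplitLabel A Aenv × (S × Option A))),
      IsTrace (SplitStep D T envRel) s0 tr ∧
      ∃ (p : S × Option A) (b : A) (q : S × Option A),
        (p, SplitLabel.exec b, q) ∈ traceSteps s0 tr ∧ Adm p.1 b = false :=
  no_split_system_preserves_admissibility_general Adm D T envRel s a e sStar hD hEnv hBad
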